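/- Let ℓ be a real number with ℓ > 2π. Set t = 1 − (2π/ℓ)² and r₀ = −artanh(√t)/√t. Then the integral of the function f(r) = (ℓ·√(1−t)/√t)·sinh(√t·(r − r₀)) over the interval [r₀, 0] equals ℓ²/(ℓ + 2π). (This is the computation of the area of the cross-sectional meridian disk of the negatively curved solid torus in the proof of Theorem 2.1, item (4): the limiting meridian disk area of the Dehn filling solid torus for a slope of length ℓ is ℓ²/(ℓ+2π).) -/

import Mathlib

open Real

/-- The real inverse hyperbolic tangent: `artanh x = log ((1+x)/(1-x)) / 2`,
satisfying `tanh (artanh x) = x` for `|x| < 1`. -/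
noncomputable def artanh (x : ℝ) : ℝ := Real.log ((1 + x) / (1 - x)) / 2

lemma cosh_artanh {x : ℝ} (h0 : 0 ≤ x) (h1 : x < 1) :
    Real.cosh (_root_.artanh x) = 1 / Real.sqrt (1 - x ^ 2) := by
  have hu : (0:ℝ) < (1 + x) / (1 - x) := by
    apply div_pos <;> linarith
  have he : Real.exp (Real.log ((1 + x) / (1 - x)) / 2)
      = Real.sqrt ((1 + x) / (1 - x)) := by
    rw [Real.sqrt_eq_rpow, Real.rpow_def_of_pos hu]
    ring_nf
  have ha : Real.sqrt (1 + x) ^ 2 = 1 + x := Real.sq_sqrt (by linarith)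
  have hb : Real.sqrt (1 - x) ^ 2 = 1 - x := Real.sq_sqrt (by linarith)
  have ha0 : 0 < Real.sqrt (1 + x) := Real.sqrt_pos.mpr (by linarith)
  have hb0 : 0 < Real.sqrt (1 - x) := Real.sqrt_pos.mpr (by linarith)
  have hdiv : Real.sqrt ((1 + x) / (1 - x)) = Real.sqrt (1 + x) / Real.sqrt (1 - x) :=
    Real.sqrt_div (by linarith) _
  have hsq : Real.sqrt (1 - x ^ 2) = Real.sqrt (1 + x) * Real.sqrt (1 - x) := by
    rw [show 1 - x ^ 2 = (1 + x) * (1 - x) by ring, Real.sqrt_mul (by linarith)]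
  rw [_root_.artanh, Real.cosh_eq, he, Real.exp_neg, he, hdiv, hsq]
  rw [inv_div]
  have hb' : Real.sqrt (1 - x) * Real.sqrt (1 - x) = 1 - x := by nlinarith
  field_simp
  rw [ha, hb]
  ring

/-- The meridian-disk area computation from Theorem 2.1 (item 4):
for a slope of length `ℓ > 2π`, with `t = 1 - (2π/ℓ)²` and
`r₀ = -artanh(√t)/√t`, the integral of
`f(r) = (ℓ·√(1-t)/√t)·sinh(√t·(r - r₀))` over `[r₀, 0]` equals `ℓ²/(ℓ+2π)`. -/
theorem meridian_disk_area (ℓ t r₀ : ℝ) (hℓ : ℓ > 2 * π)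
    (ht : t = 1 - (2 * π / ℓ) ^ 2)
    (hr₀ : r₀ = -(_root_.artanh (Real.sqrt t) / Real.sqrt t)) :
    (∫ r in r₀..(0 : ℝ),
        (ℓ * Real.sqrt (1 - t) / Real.sqrt t) * Real.sinh (Real.sqrt t * (r - r₀)))
      = ℓ ^ 2 / (ℓ + 2 * π) := by
  have hπ : 0 < π := Real.pi_pos
  have hℓ0 : 0 < ℓ := by linarith
  have hp0 : 0 < 2 * π / ℓ := by positivity
  have hp1 : 2 * π / ℓ < 1 := (div_lt_one hℓ0).mpr hℓ
  have ht0 : 0 < t := by rw [ht]; nlinarith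
  have ht1 : t < 1 := by rw [ht]; nlinarith
  set s := Real.sqrt t with hs_def
  have hs0 : 0 < s := Real.sqrt_pos.mpr ht0
  have hs2 : s ^ 2 = t := Real.sq_sqrt ht0.le
  have hs1 : s < 1 := by nlinarith
  have h1t : Real.sqrt (1 - t) = 2 * π / ℓ := by
    rw [ht, show 1 - (1 - (2*π/ℓ)^2) = (2*π/ℓ)^2 by ring, Real.sqrt_sq hp0.le]
  -- compute the integral
  have hint : (∫ r in r₀..(0 : ℝ), Real.sinh (s * (r - r₀)))
      = (Real.cosh (s * (0 - r₀)) - Real.cosh (s * (r₀ - r₀))) / s := by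
    rw [intervalIntegral.integral_eq_sub_of_hasDerivAt (f := fun r => Real.cosh (s * (r - r₀)) / s)]
    · ring
    · intro x hx
      have : HasDerivAt (fun r : ℝ => s * (r - r₀)) s x := by
        simpa using ((hasDerivAt_id x).sub_const r₀).const_mul s
      have h2 := (Real.hasDerivAt_cosh (s * (x - r₀))).comp x this
      have h3 := h2.div_const s
      simpa [mul_comm, mul_div_assoc, mul_div_cancel_left₀ _ hs0.ne'] using h3
    · apply Continuous.intervalIntegrable
      continuity
  rw [intervalIntegral.integral_const_mul, hint]
  have har : s * (0 - r₀) = _root_.artanh s := by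
    rw [hr₀]; field_simp; ring
  rw [har, sub_self, mul_zero, Real.cosh_zero,
    _root_.cosh_artanh hs0.le hs1, hs2, h1t]
  have hℓπ : ℓ + 2 * π ≠ 0 := by positivity
  have hℓπ' : ℓ - 2 * π ≠ 0 := by nlinarith
  have hss : s * s = t := by nlinarith
  have htℓ : t * ℓ ^ 2 = ℓ ^ 2 - (2 * π) ^ 2 := by rw [ht]; field_simp
  field_simp
  ring_nf
  linear_combination (-ℓ^2) * hss - htℓ
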